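/- Fix τ₀ in the upper half plane ℍ. The entire function z ↦ θ₁₁(z; τ₀) has a zero of order exactly 1 at the origin: θ₁₁(0; τ₀) = 0 and the complex derivative of z ↦ θ₁₁(z; τ₀) at z = 0 is nonzero. -/

import Mathlib

/-!
Writing `θ` for `jacobiTheta₂`, one has `θ₁₁(z;τ) = e^{πi(τ/4 + z + 1/2)} θ(z + (1+τ)/2, τ)`,
and `(1+τ)/2` is the zero of `θ(·, τ)` forced by its quasi-periodicity. Hence `θ₁₁(0;τ) = 0` and
`∂_z θ₁₁(0;τ)` is a nonzero multiple of `D(τ) = θ'((1+τ)/2, τ)`. We have `D(τ+1) = D(τ)`, and the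
functional equation makes `D(-1/τ)` a nonzero multiple of `D(τ)`, so the zero set of `D` is
`SL(2,ℤ)`-invariant. Every orbit meets `Im τ ≥ 1/2`, and there the term `2πi` of index `-1` of the
series for `D(τ)` outweighs all the others together.
-/

open Filter Topology

noncomputable section

/-- The elliptic theta function
`θ₁₁(z;τ) = ∑_{m ∈ ℤ} exp(π√-1((m+1/2)²τ + 2(m+1/2)(z+1/2)))`. -/
def theta (z τ : ℂ) : ℂ :=
  ∑' m : ℤ, Complex.exp ((Real.pi : ℂ) * Complex.I *
    (((m : ℂ) + 1 / 2) ^ 2 * τ + 2 * ((m : ℂ) + 1 / 2) * (z + 1 / 2)))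

open Complex
open scoped Real UpperHalfPlane MatrixGroups Pointwise

lemma HasSum.ne_zero_of_dominant_term {ι E : Type*} [NormedAddCommGroup E] {f : ι → E} {s : E}
    (hf : HasSum f s) (i₀ : ι) {g : ι → ℝ} {a : ℝ} (hg : HasSum g a) (hg₀ : 0 ≤ g i₀)
    (hfg : ∀ i ≠ i₀, ‖f i‖ ≤ g i) (ha : a < ‖f i₀‖) : s ≠ 0 := by
  classical
  have hsplit : s = f i₀ + ∑' i, if i = i₀ then 0 else f i :=
    hf.tsum_eq ▸ hf.summable.tsum_eq_add_tsum_ite i₀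
  have htail : ‖∑' i, if i = i₀ then 0 else f i‖ ≤ a := by
    refine tsum_of_norm_bounded hg fun i ↦ ?_
    split_ifs with h
    · simpa [h] using hg₀
    · exact hfg i h
  rintro rfl
  rw [eq_neg_of_add_eq_zero_left hsplit.symm, norm_neg] at ha
  linarith

lemma hasSum_natAbs_mul_pow_natAbs {r : ℝ} (hr₀ : 0 ≤ r) (hr₁ : r < 1) :
    HasSum (fun n : ℤ ↦ (n.natAbs : ℝ) * r ^ n.natAbs) (2 * r / (1 - r) ^ 2) := by
  have hpos : HasSum (fun k : ℕ ↦ ((k + 1 : ℕ) : ℝ) * r ^ (k + 1)) (r / (1 - r) ^ 2) := by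
    have h := (hasSum_nat_add_iff' (f := fun k : ℕ ↦ (k : ℝ) * r ^ k) 1).2
      (hasSum_coe_mul_geometric_of_norm_lt_one (by rwa [Real.norm_of_nonneg hr₀]))
    simpa using h
  have hneg (n : ℕ) : (-((n : ℤ) + 1)).natAbs = n + 1 := by omega
  have h := HasSum.of_add_one_of_neg_add_one (f := fun n : ℤ ↦ (n.natAbs : ℝ) * r ^ n.natAbs)
    (by simpa only [← Nat.cast_succ, Int.natAbs_natCast] using hpos)
    (by simpa only [hneg] using hpos)
  rwa [Int.natAbs_zero, Nat.cast_zero, zero_mul, add_zero, ← two_mul, ← mul_div_assoc] at h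

lemma exp_neg_pi_mul_le_quarter {t : ℝ} (ht : 1 / 2 ≤ t) : rexp (-π * t) ≤ 1 / 4 := by
  have h4 : 4 ≤ rexp (3 / 2) := by
    refine le_trans ?_ (Real.sum_le_exp_of_nonneg (by norm_num) 4)
    norm_num [Finset.sum_range_succ, Nat.factorial]
  calc rexp (-π * t) ≤ rexp (-(3 / 2)) := Real.exp_le_exp.2 (by nlinarith [Real.pi_gt_three])
    _ ≤ 1 / 4 := by rw [Real.exp_neg, one_div]; exact inv_anti₀ (by norm_num) h4

lemma jacobiTheta₂_half_period_eq_zero (τ : ℂ) : jacobiTheta₂ ((1 + τ) / 2) τ = 0 := by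
  have h := jacobiTheta₂_add_left' ((1 - τ) / 2) τ
  rw [show (1 - τ) / 2 + τ = (1 + τ) / 2 by ring,
    show -(π : ℂ) * I * (τ + 2 * ((1 - τ) / 2)) = -(π * I) by ring, Complex.exp_neg,
    Complex.exp_pi_mul_I, show (1 - τ) / 2 = -((1 + τ) / 2) + 1 by ring,
    jacobiTheta₂_add_left, jacobiTheta₂_neg_left] at h
  linear_combination h / 2

lemma jacobiTheta₂_term_add_one_right (n : ℤ) (z τ : ℂ) :
    jacobiTheta₂_term n z (τ + 1) = jacobiTheta₂_term n (z + 1 / 2) τ := by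
  obtain ⟨k, hk⟩ := Int.even_mul_pred_self n
  refine Complex.exp_eq_exp_iff_exists_int.2 ⟨k, ?_⟩
  have hk' : (n : ℂ) * (n - 1) = k + k := by exact_mod_cast hk
  linear_combination π * I * hk'

lemma jacobiTheta₂'_add_one_right (z τ : ℂ) :
    jacobiTheta₂' z (τ + 1) = jacobiTheta₂' (z + 1 / 2) τ :=
  tsum_congr fun n ↦ by
    rw [jacobiTheta₂'_term, jacobiTheta₂_term_add_one_right, jacobiTheta₂'_term]

lemma jacobiTheta₂'_half_period_add_one (τ : ℂ) :
    jacobiTheta₂' ((1 + (τ + 1)) / 2) (τ + 1) = jacobiTheta₂' ((1 + τ) / 2) τ := by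
  rw [jacobiTheta₂'_add_one_right, show (1 + (τ + 1)) / 2 + 1 / 2 = (1 + τ) / 2 + 1 by ring,
    jacobiTheta₂'_add_left]

lemma jacobiTheta₂'_half_period_neg_inv_eq_zero_iff {τ : ℂ} (hτ : τ ≠ 0) :
    jacobiTheta₂' ((1 + -1 / τ) / 2) (-1 / τ) = 0 ↔ jacobiTheta₂' ((1 + τ) / 2) τ = 0 := by
  have hz : (1 + τ) / 2 / τ = -((1 + -1 / τ) / 2) + 1 := by field_simp; ring
  rw [jacobiTheta₂'_functional_equation ((1 + τ) / 2) τ, hz, jacobiTheta₂'_add_left,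
    jacobiTheta₂'_neg_left, jacobiTheta₂_add_left, jacobiTheta₂_neg_left,
    jacobiTheta₂_half_period_eq_zero]
  simp [hτ]

lemma norm_jacobiTheta₂'_term_half_period (n : ℤ) (τ : ℂ) :
    ‖jacobiTheta₂'_term n ((1 + τ) / 2) τ‖ =
      2 * π * |(n : ℝ)| * rexp (-π * τ.im * (n ^ 2 + n)) := by
  have hre : (2 * π * I * n * ((1 + τ) / 2) + π * I * n ^ 2 * τ).re =
      -π * τ.im * (n ^ 2 + n) := by
    simp [mul_re, mul_im, sq]
    ring
  rw [jacobiTheta₂'_term, jacobiTheta₂_term, norm_mul, norm_exp, hre]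
  simp [abs_of_pos Real.pi_pos]

lemma jacobiTheta₂'_term_neg_one_half_period (τ : ℂ) :
    jacobiTheta₂'_term (-1) ((1 + τ) / 2) τ = 2 * π * I := by
  have hexp : 2 * (π : ℂ) * I * ((-1 : ℤ) : ℂ) * ((1 + τ) / 2) + π * I * ((-1 : ℤ) : ℂ) ^ 2 * τ =
      -(π * I) := by push_cast; ring
  rw [jacobiTheta₂'_term, jacobiTheta₂_term, hexp, Complex.exp_neg, Complex.exp_pi_mul_I]
  push_cast
  ring

lemma norm_jacobiTheta₂'_term_half_period_le {τ : ℂ} (hτ : 0 ≤ τ.im) {n : ℤ} (hn : n ≠ -1) :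
    ‖jacobiTheta₂'_term n ((1 + τ) / 2) τ‖ ≤
      2 * π * ((n.natAbs : ℝ) * rexp (-π * τ.im) ^ n.natAbs) := by
  have hexp : |(n : ℝ)| ≤ n ^ 2 + n := by
    have : |n| ≤ n ^ 2 + n := by
      rcases le_or_gt 0 n with h | h
      · rw [abs_of_nonneg h]; nlinarith
      · rw [abs_of_neg h]; nlinarith [show n ≤ -2 by omega]
    exact_mod_cast this
  rw [norm_jacobiTheta₂'_term_half_period, ← Real.exp_nat_mul, Nat.cast_natAbs, Int.cast_abs,
    mul_assoc]
  refine mul_le_mul_of_nonneg_left (mul_le_mul_of_nonneg_left (Real.exp_le_exp.2 ?_)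
    (abs_nonneg _)) (by positivity)
  nlinarith [mul_nonneg Real.pi_pos.le hτ]

lemma jacobiTheta₂'_half_period_ne_zero_of_half_le_im {τ : ℂ} (hτ : 1 / 2 ≤ τ.im) :
    jacobiTheta₂' ((1 + τ) / 2) τ ≠ 0 := by
  set r := rexp (-π * τ.im)
  have hr₀ : 0 ≤ r := (Real.exp_pos _).le
  have hr : r ≤ 1 / 4 := exp_neg_pi_mul_le_quarter hτ
  refine (hasSum_jacobiTheta₂'_term _ (by linarith)).ne_zero_of_dominant_term (-1)
    ((hasSum_natAbs_mul_pow_natAbs hr₀ (by linarith)).mul_left (2 * π)) (by positivity)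
    (fun n hn ↦ norm_jacobiTheta₂'_term_half_period_le (by linarith) hn) ?_
  rw [jacobiTheta₂'_term_neg_one_half_period, norm_mul, norm_mul, Complex.norm_two, norm_I,
    mul_one, Complex.norm_real, Real.norm_of_nonneg Real.pi_pos.le]
  have : 2 * r / (1 - r) ^ 2 < 1 := by
    rw [div_lt_one (by nlinarith)]
    nlinarith
  nlinarith [Real.pi_pos]

lemma jacobiTheta₂'_half_period_smul_eq_zero_iff (γ : SL(2, ℤ)) (τ : ℍ) :
    jacobiTheta₂' ((1 + ↑(γ • τ)) / 2) ↑(γ • τ) = 0 ↔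
      jacobiTheta₂' ((1 + (τ : ℂ)) / 2) τ = 0 := by
  let zeros : Set ℍ := {τ | jacobiTheta₂' ((1 + (τ : ℂ)) / 2) τ = 0}
  suffices MulAction.stabilizer SL(2, ℤ) zeros = ⊤ from
    MulAction.mem_stabilizer_set.1 (this ▸ Subgroup.mem_top γ) τ
  rw [eq_top_iff, ← SpecialLinearGroup.SL2Z_generators, Subgroup.closure_le]
  rintro g (rfl | rfl) <;> refine MulAction.mem_stabilizer_set.2 fun τ ↦ ?_
  · have hS : ((ModularGroup.S • τ : ℍ) : ℂ) = -1 / τ := by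
      rw [UpperHalfPlane.modular_S_smul, UpperHalfPlane.coe_mk, neg_div, one_div, inv_neg]
    change jacobiTheta₂' ((1 + ↑(ModularGroup.S • τ)) / 2) ↑(ModularGroup.S • τ) = 0 ↔ _
    rw [hS]
    exact jacobiTheta₂'_half_period_neg_inv_eq_zero_iff τ.ne_zero
  · have hT : ((ModularGroup.T • τ : ℍ) : ℂ) = τ + 1 := by
      rw [UpperHalfPlane.modular_T_smul, UpperHalfPlane.coe_vadd, Complex.ofReal_one, add_comm]
    change jacobiTheta₂' ((1 + ↑(ModularGroup.T • τ)) / 2) ↑(ModularGroup.T • τ) = 0 ↔ _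
    rw [hT, jacobiTheta₂'_half_period_add_one]
    rfl

lemma jacobiTheta₂'_half_period_ne_zero {τ : ℂ} (hτ : 0 < τ.im) :
    jacobiTheta₂' ((1 + τ) / 2) τ ≠ 0 := by
  obtain ⟨γ, hγ⟩ := ModularGroup.exists_one_half_le_im_smul ⟨τ, hτ⟩
  exact mt (jacobiTheta₂'_half_period_smul_eq_zero_iff γ ⟨τ, hτ⟩).2
    (jacobiTheta₂'_half_period_ne_zero_of_half_le_im hγ)

lemma theta_eq_cexp_mul_jacobiTheta₂ (z τ : ℂ) :
    theta z τ = cexp (π * I * (τ / 4 + z + 1 / 2)) * jacobiTheta₂ (z + (1 + τ) / 2) τ := by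
  rw [jacobiTheta₂, ← tsum_mul_left]
  refine tsum_congr fun m ↦ ?_
  rw [jacobiTheta₂_term, ← Complex.exp_add]
  ring_nf

lemma theta_zero_left (τ : ℂ) : theta 0 τ = 0 := by
  rw [theta_eq_cexp_mul_jacobiTheta₂, zero_add, jacobiTheta₂_half_period_eq_zero, mul_zero]

lemma hasDerivAt_theta_zero {τ : ℂ} (hτ : 0 < τ.im) :
    HasDerivAt (theta · τ)
      (cexp (π * I * (τ / 4 + 1 / 2)) * jacobiTheta₂' ((1 + τ) / 2) τ) 0 := by
  have hexp : HasDerivAt (fun z ↦ cexp (π * I * (τ / 4 + z + 1 / 2)))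
      (cexp (π * I * (τ / 4 + 0 + 1 / 2)) * (π * I)) 0 :=
    (((hasDerivAt_id _).const_add _).add_const _).const_mul _ |>.cexp |>.congr_deriv (by simp)
  have htheta : HasDerivAt (fun z ↦ jacobiTheta₂ (z + (1 + τ) / 2) τ)
      (jacobiTheta₂' ((1 + τ) / 2) τ) 0 := by
    simpa using (hasDerivAt_jacobiTheta₂_fst _ hτ).comp_add_const 0 ((1 + τ) / 2)
  rw [show (theta · τ) = _ from funext (theta_eq_cexp_mul_jacobiTheta₂ · τ)]
  refine (hexp.fun_mul htheta).congr_deriv ?_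
  rw [zero_add, add_zero, jacobiTheta₂_half_period_eq_zero, mul_zero, zero_add]

/-- For `τ₀ ∈ ℍ`, the entire function `z ↦ θ₁₁(z; τ₀)` has a zero of order exactly one at
the origin: it vanishes at `0` and its complex derivative at `0` is nonzero. -/
theorem theta_simple_zero_at_origin (τ₀ : ℂ) (hτ₀ : 0 < τ₀.im) :
    theta 0 τ₀ = 0 ∧ deriv (fun z => theta z τ₀) 0 ≠ 0 := by
  refine ⟨theta_zero_left τ₀, ?_⟩
  rw [(hasDerivAt_theta_zero hτ₀).deriv]
  exact mul_ne_zero (Complex.exp_ne_zero _) (jacobiTheta₂'_half_period_ne_zero hτ₀)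

end
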